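/- arXiv:1509.00288 — 3 statements merged into one kernel-verified Lean document; each statement's English description precedes it below -/
import Mathlib

section
/- Let (X,d) be a boundedly compact metric space, o ∈ X, and let (pₙ) be a sequence of points diverging almost straightly, i.e., for every ε > 0 there exists L such that for all n ≥ m ≥ L, d(p_L, p_m) + d(p_m, p_n) - d(p_L, p_n) < ε. Then the functions fₙ(x) = d(pₙ, x) - d(pₙ, o) converge uniformly on compact sets to a 1-Lipschitz function f, and moreover lim_{n→∞} (f(pₙ) + d(o, pₙ)) = 0. -/
/-!
Fix `y` and a base point `L` given by the straightness condition at scale `δ`. The quantity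
`d(pₙ, y) - d(p_L, pₙ)` is bounded below by `-d(p_L, y)` and, by the triangle inequality through
`pₘ`, decreases up to `δ` for `n ≥ m ≥ L`; hence it eventually oscillates by less than `2δ`.
Subtracting its values at `y = x` and `y = o` shows that `fₙ(x) = d(pₙ, x) - d(pₙ, o)` is Cauchy.
The pointwise limit `f` of the `1`-Lipschitz functions `fₙ` is `1`-Lipschitz, and by Ascoli the
convergence is uniform on compact sets. Finally `f(pₙ) + d(o, pₙ) ≥ 0` by the triangle
inequality, while the same estimates at `y = o` bound it above by `3δ`.
-/

open Filter Topology

theorem Real.exists_abs_sub_lt_of_bddBelow_of_le_add {v : ℕ → ℝ} {L : ℕ} {δ : ℝ} (hδ : 0 < δ)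
    (hbdd : BddBelow (v '' Set.Ici L)) (hv : ∀ m n, L ≤ m → m ≤ n → v n ≤ v m + δ) :
    ∃ N, L ≤ N ∧ ∀ m ≥ N, ∀ n ≥ N, |v n - v m| < 2 * δ := by
  obtain ⟨_, ⟨N, hLN, rfl⟩, hN⟩ :=
    Real.lt_sInf_add_pos ((Set.nonempty_Ici (a := L)).image v) hδ
  have hmem : ∀ k ≥ N, sInf (v '' Set.Ici L) ≤ v k ∧ v k < sInf (v '' Set.Ici L) + 2 * δ :=
    fun k hk => ⟨csInf_le hbdd ⟨k, hLN.trans hk, rfl⟩, by linarith [hv N k hLN hk]⟩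
  refine ⟨N, hLN, fun m hm n hn => abs_sub_lt_iff.2 ⟨?_, ?_⟩⟩ <;>
    linarith [hmem m hm, hmem n hn]

theorem LipschitzWith.tendstoUniformlyOn_of_tendsto {ι X Y : Type*} [PseudoMetricSpace X]
    [PseudoMetricSpace Y] {l : Filter ι} {F : ι → X → Y} {f : X → Y} {K : NNReal}
    (hF : ∀ i, LipschitzWith K (F i)) (h : Tendsto F l (𝓝 f)) {s : Set X} (hs : IsCompact s) :
    TendstoUniformlyOn F f l s := by
  have hFs : EquicontinuousOn F s :=
    (LipschitzWith.uniformEquicontinuous F K hF).equicontinuous.equicontinuousOn s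
  have hunif := (EquicontinuousOn.tendsto_uniformOnFun_iff_pi' (𝔖 := {s})
    (by simpa using hs) (by simpa using hFs) l f).2
    (tendsto_pi_nhds.2 fun x => tendsto_pi_nhds.1 h x)
  exact UniformOnFun.tendsto_iff_tendstoUniformlyOn.1 hunif s rfl

section AlmostStraight

variable {X : Type*} [PseudoMetricSpace X]

def StraightFrom (p : ℕ → X) (L : ℕ) (δ : ℝ) : Prop :=
  ∀ m n : ℕ, L ≤ m → m ≤ n → dist (p L) (p m) + dist (p m) (p n) - dist (p L) (p n) < δ

def AlmostStraight (p : ℕ → X) : Prop :=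
  ∀ ε > (0 : ℝ), ∃ L : ℕ, StraightFrom p L ε

variable {p : ℕ → X} {L : ℕ} {δ : ℝ}

theorem StraightFrom.dist_sub_dist_le_add (hL : StraightFrom p L δ) {m n : ℕ} (hm : L ≤ m)
    (hmn : m ≤ n) (y : X) :
    dist (p n) y - dist (p L) (p n) ≤ dist (p m) y - dist (p L) (p m) + δ := by
  linarith [hL m n hm hmn, dist_triangle (p n) (p m) y, dist_comm (p m) (p n)]

theorem StraightFrom.exists_abs_sub_lt (hL : StraightFrom p L δ) (hδ : 0 < δ) (y : X) :
    ∃ N, L ≤ N ∧ ∀ m ≥ N, ∀ n ≥ N,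
      |(dist (p n) y - dist (p L) (p n)) - (dist (p m) y - dist (p L) (p m))| < 2 * δ := by
  refine Real.exists_abs_sub_lt_of_bddBelow_of_le_add hδ ⟨-dist (p L) y, ?_⟩
    fun m n hm hmn => hL.dist_sub_dist_le_add hm hmn y
  rintro _ ⟨n, -, rfl⟩
  linarith [dist_triangle (p L) y (p n), dist_comm y (p n)]

theorem AlmostStraight.cauchySeq_dist_sub_dist (hp : AlmostStraight p) (o x : X) :
    CauchySeq fun n => dist (p n) x - dist (p n) o := by
  refine Metric.cauchySeq_iff'.2 fun ε hε => ?_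
  obtain ⟨L, hL⟩ := hp (ε / 4) (by positivity)
  obtain ⟨N₁, -, hN₁⟩ := hL.exists_abs_sub_lt (by positivity) x
  obtain ⟨N₂, -, hN₂⟩ := hL.exists_abs_sub_lt (by positivity) o
  refine ⟨max N₁ N₂, fun n hn => ?_⟩
  have hx := abs_lt.1 <| hN₁ (max N₁ N₂) (le_max_left _ _) n (le_of_max_le_left hn)
  have ho := abs_lt.1 <| hN₂ (max N₁ N₂) (le_max_right _ _) n (le_of_max_le_right hn)
  rw [Real.dist_eq, abs_lt]
  constructor <;> linarith [hx.1, hx.2, ho.1, ho.2]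

theorem AlmostStraight.tendsto_add_dist (hp : AlmostStraight p) {o : X} {f : X → ℝ}
    (hf : ∀ x, Tendsto (fun n => dist (p n) x - dist (p n) o) atTop (𝓝 (f x))) :
    Tendsto (fun n => f (p n) + dist o (p n)) atTop (𝓝 0) := by
  have hnonneg : ∀ x, 0 ≤ f x + dist o x := fun x =>
    ge_of_tendsto ((hf x).add_const _) (Eventually.of_forall fun k => by
      linarith [dist_triangle (p k) x o, dist_comm x o])
  refine tendsto_order.2 ⟨fun a ha => Eventually.of_forall fun n => ha.trans_le (hnonneg _),
    fun ε hε => ?_⟩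
  obtain ⟨L, hL⟩ := hp (ε / 4) (by positivity)
  obtain ⟨N, hLN, hN⟩ := hL.exists_abs_sub_lt (by positivity) o
  filter_upwards [eventually_ge_atTop N] with n hn
  have hle : f (p n) + dist o (p n) ≤ 3 * (ε / 4) := by
    refine le_of_tendsto ((hf (p n)).add_const _) ?_
    filter_upwards [eventually_ge_atTop n] with k hk
    have hstep := hL.dist_sub_dist_le_add (hLN.trans hn) hk (p n)
    have hosc := (abs_lt.1 (hN n hn k (hn.trans hk))).1
    linarith [dist_self (p n), dist_comm o (p n)]
  linarith

end AlmostStraight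

theorem stmt4_general {X : Type*} [MetricSpace X] (o : X) (p : ℕ → X)
    (hstraight : ∀ ε > (0 : ℝ), ∃ L : ℕ, ∀ m n : ℕ, L ≤ m → m ≤ n →
      dist (p L) (p m) + dist (p m) (p n) - dist (p L) (p n) < ε) :
    ∃ f : X → ℝ, LipschitzWith 1 f ∧
      (∀ K : Set X, IsCompact K →
        TendstoUniformlyOn (fun n x => dist (p n) x - dist (p n) o) f atTop K) ∧
      Tendsto (fun n => f (p n) + dist o (p n)) atTop (𝓝 0) := by
  have hp : AlmostStraight p := hstraight
  set F : ℕ → X → ℝ := fun n x => dist (p n) x - dist (p n) o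
  have hFlip : ∀ n, LipschitzWith 1 (F n) := fun n => by
    simpa using (LipschitzWith.dist_right (p n)).sub (LipschitzWith.const (dist (p n) o))
  have hF : ∀ x, Tendsto (F · x) atTop (𝓝 (limUnder atTop (F · x))) := fun x =>
    (hp.cauchySeq_dist_sub_dist o x).tendsto_limUnder
  refine ⟨fun x => limUnder atTop (F · x), ?_, fun K hK => ?_, hp.tendsto_add_dist hF⟩
  · exact (isClosed_setOfPred_lipschitzWith 1).mem_of_tendsto (tendsto_pi_nhds.2 hF)
      (Eventually.of_forall hFlip)
  · exact LipschitzWith.tendstoUniformlyOn_of_tendsto hFlip (tendsto_pi_nhds.2 hF) hK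

/-- In a boundedly compact (proper) metric space, if `pₙ` diverges almost
straightly, then `fₙ(x) = d(pₙ,x) - d(pₙ,o)` converges uniformly on compact
sets to a 1-Lipschitz function `f`, and `f(pₙ) + d(o,pₙ) → 0`. -/
theorem stmt4 {X : Type*} [MetricSpace X] [ProperSpace X] (o : X) (p : ℕ → X)
    (hdiv : Tendsto (fun n => dist o (p n)) atTop atTop)
    (hstraight : ∀ ε > (0 : ℝ), ∃ L : ℕ, ∀ m n : ℕ, L ≤ m → m ≤ n →
      dist (p L) (p m) + dist (p m) (p n) - dist (p L) (p n) < ε) :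
    ∃ f : X → ℝ, LipschitzWith 1 f ∧
      (∀ K : Set X, IsCompact K →
        TendstoUniformlyOn (fun n x => dist (p n) x - dist (p n) o) f atTop K) ∧
      Tendsto (fun n => f (p n) + dist o (p n)) atTop (𝓝 0) :=
  stmt4_general o p hstraight
end

section
/- Any curve in ℝ² that starts at the origin, ends at the point (0, 2R) (R > 0), and encloses balayage area πR²/2 + 2Rh with h > 0 relative to the chord, and which is an arc of a circle, must be an arc of radius S_R > R centered at (μ_R, R) with μ_R > 0 and S_R² = R² + μ_R²; moreover its balayage area A satisfies πS_R²/2 + 2Rμ_R ≤ A ≤ πS_R²/2 + 2S_Rμ_R. -/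
open Real Set Filter Topology MeasureTheory

/-!
Write the arc as `ρ = c + S (cos θ, sin θ)` with a continuous angle `θ`, obtained by lifting
through the covering `ℝ → Circle`. Then `x y' - y x' = S² θ' + (c₁ y - c₂ x)'`, so the balayage
area is `S² φ / 2 + R μ`, where `φ = θ T - θ 0` is the central angle of the arc. Injectivity forces
`φ < 2π` and the endpoints determine `cos φ` and `sin φ`. Writing `φ = π + 2α` gives
`R = S cos α` and `μ = S sin α`; an area above `πR²/2` forces `0 < α < π/2`, and there the two
bounds reduce to `sin α cos α ≤ α ≤ sin α (2 - cos α)`.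
-/

theorem exists_continuous_angle_of_sq_add_sq_eq_one {X Y : ℝ → ℝ} (hX : Continuous X)
    (hY : Continuous Y) (h : ∀ t, X t ^ 2 + Y t ^ 2 = 1) :
    ∃ θ : ℝ → ℝ, Continuous θ ∧ ∀ t, cos (θ t) = X t ∧ sin (θ t) = Y t := by
  have hmem : ∀ t, (X t + Y t * Complex.I : ℂ) ∈ Submonoid.unitSphere ℂ := fun t => by
    rw [Submonoid.unitSphere, Submonoid.mem_mk, Subsemigroup.mem_mk, mem_sphere_zero_iff_norm,
      Complex.norm_add_mul_I, h, Real.sqrt_one]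
  let f : C(ℝ, Circle) := ⟨fun t => ⟨_, hmem t⟩, by fun_prop⟩
  obtain ⟨θ, ⟨-, hθ⟩, -⟩ := Circle.isCoveringMap_exp.existsUnique_continuousMap_lifts f 0
    (f 0).val.arg (Circle.exp_arg _)
  refine ⟨θ, θ.continuous, fun t => ?_⟩
  have key : (Circle.exp (θ t) : ℂ) = X t + Y t * Complex.I :=
    congrArg Subtype.val (congrFun hθ t)
  rw [Circle.coe_exp] at key
  exact ⟨by simpa [Complex.exp_ofReal_mul_I_re] using congrArg Complex.re key,
    by simpa [Complex.exp_ofReal_mul_I_im] using congrArg Complex.im key⟩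

theorem hasDerivAt_angle_of_cos_sin {θ X Y : ℝ → ℝ} {X' Y' t : ℝ} (hθ : ContinuousAt θ t)
    (hX : HasDerivAt X X' t) (hY : HasDerivAt Y Y' t)
    (hcos : ∀ᶠ s in 𝓝 t, cos (θ s) = X s) (hsin : ∀ᶠ s in 𝓝 t, sin (θ s) = Y s) :
    HasDerivAt θ (X t * Y' - Y t * X') t := by
  set u : ℝ → ℂ := fun s => X s + Y s * Complex.I
  have hu : ∀ᶠ s in 𝓝 t, Complex.exp (θ s * Complex.I) = u s := by
    filter_upwards [hcos, hsin] with s hc hs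
    simp [u, Complex.exp_mul_I, ← Complex.ofReal_cos, ← Complex.ofReal_sin, hc, hs]
  have hut : Complex.exp (θ t * Complex.I) = u t := hu.self_of_nhds
  have hu0 : u t ≠ 0 := hut ▸ Complex.exp_ne_zero _
  have hnorm : Complex.normSq (u t) = 1 := by
    rw [← hut, Complex.normSq_eq_norm_sq, Complex.norm_exp_ofReal_mul_I, one_pow]
  have hderiv : HasDerivAt u (X' + Y' * Complex.I) t :=
    hX.ofReal_comp.add (hY.ofReal_comp.mul_const _)
  -- near `t`, `θ s - θ t` is the principal argument of `u s / u t`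
  have hlog : HasDerivAt (fun s => (Complex.log (u s / u t)).im)
      (((X' + Y' * Complex.I) / u t) / (u t / u t)).im t :=
    Complex.imCLM.hasFDerivAt.comp_hasDerivAt t
      ((hderiv.div_const _).clog_real (by simp [hu0]))
  have hclose : ∀ᶠ s in 𝓝 t, θ s - θ t ∈ Ioo (-π) π := by
    have hlim : Tendsto (fun s => θ s - θ t) (𝓝 t) (𝓝 0) :=
      tendsto_sub_nhds_zero_iff.mpr hθ.tendsto
    exact hlim.eventually (Ioo_mem_nhds (neg_neg_iff_pos.mpr pi_pos) pi_pos)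
  have heq : θ =ᶠ[𝓝 t] fun s => θ t + (Complex.log (u s / u t)).im := by
    filter_upwards [hu, hclose] with s hs hst
    rw [Complex.log_im, ← hs, ← hut, ← Complex.exp_sub, ← sub_mul, ← Complex.ofReal_sub,
      Complex.arg_exp_mul_I, toIocMod_eq_self _ |>.mpr ⟨hst.1, by linarith [hst.2]⟩]
    ring
  refine ((hlog.const_add (θ t)).congr_of_eventuallyEq heq).congr_deriv ?_
  rw [div_self hu0, div_one, Complex.div_im, hnorm]
  simp only [u, Complex.add_re, Complex.add_im, Complex.mul_re, Complex.mul_im,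
    Complex.ofReal_re, Complex.ofReal_im, Complex.I_re, Complex.I_im]
  ring

theorem exists_continuous_angle_of_mem_circle {ρ : ℝ → ℝ × ℝ} {a b S : ℝ} {c : ℝ × ℝ}
    (hab : a ≤ b) (hS : S ≠ 0) (hρ : ContinuousOn ρ (Icc a b))
    (hcirc : ∀ t ∈ Icc a b, ((ρ t).1 - c.1) ^ 2 + ((ρ t).2 - c.2) ^ 2 = S ^ 2) :
    ∃ θ : ℝ → ℝ, Continuous θ ∧
      ∀ t ∈ Icc a b, ρ t = (c.1 + S * cos (θ t), c.2 + S * sin (θ t)) := by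
  set P : ℝ → ℝ × ℝ := fun t => ρ (projIcc a b hab t)
  have hP : Continuous P :=
    hρ.comp_continuous (continuous_subtype_val.comp continuous_projIcc) fun t => Subtype.prop _
  obtain ⟨θ, hθ, hθP⟩ := exists_continuous_angle_of_sq_add_sq_eq_one
    (X := fun t => ((P t).1 - c.1) / S) (Y := fun t => ((P t).2 - c.2) / S)
    (by fun_prop) (by fun_prop) fun t => by
      rw [div_pow, div_pow, ← add_div, hcirc _ (Subtype.prop _), div_self (pow_ne_zero 2 hS)]
  refine ⟨θ, hθ, fun t ht => ?_⟩
  obtain ⟨hcos, hsin⟩ := hθP t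
  simp only [P, projIcc_of_mem hab ht] at hcos hsin
  ext
  · rw [hcos, mul_div_cancel₀ _ hS]; ring
  · rw [hsin, mul_div_cancel₀ _ hS]; ring

theorem integral_cross_eq_of_angle {ρ ρ' : ℝ → ℝ × ℝ} {θ : ℝ → ℝ} {a b S : ℝ} {c : ℝ × ℝ}
    (hab : a ≤ b) (hS : S ≠ 0) (hderiv : ∀ t ∈ Icc a b, HasDerivAt ρ (ρ' t) t)
    (hθ : Continuous θ)
    (hangle : ∀ t ∈ Icc a b, ρ t = (c.1 + S * cos (θ t), c.2 + S * sin (θ t)))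
    (hint : IntervalIntegrable (fun t => (ρ t).1 * (ρ' t).2 - (ρ t).2 * (ρ' t).1) volume a b) :
    ∫ t in a..b, ((ρ t).1 * (ρ' t).2 - (ρ t).2 * (ρ' t).1) =
      S ^ 2 * (θ b - θ a) + (c.1 * ((ρ b).2 - (ρ a).2) - c.2 * ((ρ b).1 - (ρ a).1)) := by
  have hρ : ContinuousOn ρ (Icc a b) := fun t ht => (hderiv t ht).continuousAt.continuousWithinAt
  set Φ : ℝ → ℝ := fun t => S ^ 2 * θ t + c.1 * (ρ t).2 - c.2 * (ρ t).1
  have hΦ : ∀ t ∈ Ioo a b, HasDerivAt Φ ((ρ t).1 * (ρ' t).2 - (ρ t).2 * (ρ' t).1) t := by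
    intro t ht
    have hnhds : Icc a b ∈ 𝓝 t := Icc_mem_nhds ht.1 ht.2
    have hρt := hderiv t (Ioo_subset_Icc_self ht)
    have hx : HasDerivAt (fun s => (ρ s).1) (ρ' t).1 t :=
      (ContinuousLinearMap.fst ℝ ℝ ℝ).hasFDerivAt.comp_hasDerivAt t hρt
    have hy : HasDerivAt (fun s => (ρ s).2) (ρ' t).2 t :=
      (ContinuousLinearMap.snd ℝ ℝ ℝ).hasFDerivAt.comp_hasDerivAt t hρt
    have hθ' := hasDerivAt_angle_of_cos_sin hθ.continuousAt ((hx.sub_const c.1).div_const S)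
      ((hy.sub_const c.2).div_const S)
      (by filter_upwards [hnhds] with s hs; rw [hangle s hs]; field_simp; ring)
      (by filter_upwards [hnhds] with s hs; rw [hangle s hs]; field_simp; ring)
    refine (((hθ'.const_mul (S ^ 2)).add (hy.const_mul c.1)).sub (hx.const_mul c.2)).congr_deriv ?_
    field_simp
    ring
  have hΦc : ContinuousOn Φ (Icc a b) := by fun_prop
  rw [intervalIntegral.integral_eq_sub_of_hasDerivAt_of_le hab hΦc hΦ hint]
  ring

theorem sub_lt_period_of_injOn {α : Type*} {f g : ℝ → α} {θ : ℝ → ℝ} {a b p : ℝ}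
    (hab : a ≤ b) (hp : 0 < p) (hθ : ContinuousOn θ (Icc a b)) (hg : Function.Periodic g p)
    (hf : ∀ t ∈ Icc a b, f t = g (θ t)) (hinj : InjOn f (Ico a b)) (hne : f b ≠ f a) :
    θ b - θ a < p := by
  by_contra! h
  obtain ⟨s, hs, hθs⟩ := intermediate_value_Icc hab hθ
    (show θ a + p ∈ Icc (θ a) (θ b) from ⟨by linarith, by linarith⟩)
  have hfs : f s = f a := by
    rw [hf s hs, hf a (left_mem_Icc.mpr hab), hθs, hg]
  have hsb : s < b := lt_of_le_of_ne hs.2 fun hsb => hne (hsb ▸ hfs)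
  have := hinj ⟨hs.1, hsb⟩ ⟨le_rfl, hs.1.trans_lt hsb⟩ hfs
  subst this
  linarith

theorem pi_div_two_mul_sin_sq_le {b : ℝ} (hb₀ : 0 ≤ b) (hb₁ : b ≤ π / 2) :
    π / 2 * sin b ^ 2 ≤ b + sin b * cos b := by
  set g : ℝ → ℝ := fun y => y + sin y * cos y - π / 2 * sin y ^ 2
  set d : ℝ → ℝ := fun y => 2 * cos y - π * sin y
  have hg : ∀ y, HasDerivAt g (cos y * d y) y := fun y => by
    refine (((hasDerivAt_id y).add ((hasDerivAt_sin y).mul (hasDerivAt_cos y))).sub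
      (((hasDerivAt_sin y).pow 2).const_mul _)).congr_deriv ?_
    simp only [d]
    linear_combination -sin_sq_add_cos_sq y
  have hd : ∀ x ∈ Icc 0 (π / 2), ∀ y ∈ Icc 0 (π / 2), x ≤ y → d y ≤ d x := by
    intro x hx y hy hxy
    have := cos_le_cos_of_nonneg_of_le_pi hx.1 (by linarith [hy.2, pi_pos]) hxy
    have := sin_le_sin_of_le_of_le_pi_div_two (by linarith [hx.1, pi_pos]) hy.2 hxy
    simp only [d]
    nlinarith [pi_pos]
  have hcos : ∀ y ∈ Icc 0 (π / 2), 0 ≤ cos y := fun y hy =>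
    cos_nonneg_of_mem_Icc ⟨by linarith [hy.1, pi_pos], hy.2⟩
  have hgc : Continuous g := by fun_prop
  have hg₀ : g 0 = 0 := by simp [g]
  have hgπ : g (π / 2) = 0 := by simp [g]
  suffices 0 ≤ g b by simp only [g] at this; linarith
  -- `g' = cos * d` with `d` antitone, so the sign of `d b` controls `g'` on one side of `b`
  rcases le_total 0 (d b) with hdb | hdb
  · have hmono : MonotoneOn g (Icc 0 b) :=
      monotoneOn_of_hasDerivWithinAt_nonneg (convex_Icc _ _) hgc.continuousOn
        (fun y _ => (hg y).hasDerivWithinAt) fun y hy => by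
          rw [interior_Icc] at hy
          have hy' : y ∈ Icc 0 (π / 2) := ⟨hy.1.le, by linarith [hy.2]⟩
          exact mul_nonneg (hcos y hy') (hdb.trans (hd y hy' b ⟨hb₀, hb₁⟩ hy.2.le))
    simpa [hg₀] using hmono ⟨le_rfl, hb₀⟩ ⟨hb₀, le_rfl⟩ hb₀
  · have hanti : AntitoneOn g (Icc b (π / 2)) :=
      antitoneOn_of_hasDerivWithinAt_nonpos (convex_Icc _ _) hgc.continuousOn
        (fun y _ => (hg y).hasDerivWithinAt) fun y hy => by
          rw [interior_Icc] at hy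
          have hy' : y ∈ Icc 0 (π / 2) := ⟨by linarith [hy.1], hy.2.le⟩
          exact mul_nonpos_of_nonneg_of_nonpos (hcos y hy')
            ((hd b ⟨hb₀, hb₁⟩ y hy' hy.1.le).trans hdb)
    simpa [hgπ] using hanti ⟨le_rfl, hb₁⟩ ⟨hb₁, le_rfl⟩ hb₁

theorem le_sin_mul_two_sub_cos {a : ℝ} (ha₀ : 0 ≤ a) (ha₁ : a ≤ π / 2) :
    a ≤ sin a * (2 - cos a) := by
  set f : ℝ → ℝ := fun y => sin y * (2 - cos y) - y
  have hf : ∀ y, HasDerivAt f (2 * cos y * (1 - cos y)) y := fun y => by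
    refine (((hasDerivAt_sin y).mul ((hasDerivAt_cos y).const_sub 2)).sub
      (hasDerivAt_id y)).congr_deriv ?_
    linear_combination sin_sq_add_cos_sq y
  have hmono : MonotoneOn f (Icc 0 (π / 2)) :=
    monotoneOn_of_hasDerivWithinAt_nonneg (convex_Icc _ _) (by fun_prop)
      (fun y _ => (hf y).hasDerivWithinAt) fun y hy => by
        rw [interior_Icc] at hy
        have := cos_nonneg_of_mem_Icc ⟨by linarith [hy.1], hy.2.le⟩
        have := cos_le_one y
        positivity
  have := hmono ⟨le_rfl, by linarith [pi_pos]⟩ ⟨ha₀, ha₁⟩ ha₀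
  simp only [f, sin_zero, zero_mul, sub_zero] at this
  linarith

theorem arc_area_bounds {R S μ φ : ℝ} (hR : 0 < R) (hS : 0 < S) (hSμ : S ^ 2 = R ^ 2 + μ ^ 2)
    (hφ : φ < 2 * π) (hcos : S ^ 2 * cos φ = μ ^ 2 - R ^ 2)
    (hsin : S ^ 2 * sin φ = -(2 * R * μ))
    (hA : π * R ^ 2 / 2 < S ^ 2 * φ / 2 + R * μ) :
    0 < μ ∧ π * S ^ 2 / 2 + 2 * R * μ ≤ S ^ 2 * φ / 2 + R * μ ∧
      S ^ 2 * φ / 2 + R * μ ≤ π * S ^ 2 / 2 + 2 * S * μ := by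
  have hπ := pi_pos
  have hφ₀ : 0 < φ := by
    by_contra! h
    have := sin_le (neg_nonneg.mpr h)
    rw [sin_neg] at this
    nlinarith [mul_le_mul_of_nonneg_left this (sq_nonneg S), mul_pos hπ (pow_pos hR 2)]
  set α := (φ - π) / 2
  have hφα : φ = 2 * α + π := by ring
  have hcosα : 0 < cos α := cos_pos_of_mem_Ioo ⟨by linarith, by linarith⟩
  rw [hφα, cos_add_pi, cos_two_mul] at hcos
  rw [hφα, sin_add_pi, sin_two_mul] at hsin
  have hRα : R = S * cos α := by
    refine ((sq_eq_sq₀ hR.le (by positivity)).mp ?_)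
    linear_combination (hcos - hSμ) / 2
  have hμα : μ = S * sin α := by
    refine mul_left_cancel₀ (by positivity : 2 * S * cos α ≠ 0) ?_
    linear_combination hsin - 2 * μ * hRα
  have hA' : S ^ 2 * φ / 2 + R * μ = S ^ 2 * (α + π / 2 + sin α * cos α) := by
    rw [hφα, hRα, hμα]; ring
  have hα₀ : 0 < α := by
    by_contra! h
    have := pi_div_two_mul_sin_sq_le (b := -α) (by linarith) (by linarith)
    rw [sin_neg, cos_neg, neg_sq] at this
    have := mul_le_mul_of_nonneg_left this (sq_nonneg S)
    rw [hA', hRα] at hA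
    linarith [congrArg (π * S ^ 2 * ·) (sin_sq_add_cos_sq α)]
  have hsinα : 0 < sin α := sin_pos_of_pos_of_lt_pi hα₀ (by linarith)
  have hlow : sin α * cos α ≤ α := by
    have := sin_le (by linarith : 0 ≤ 2 * α)
    rw [sin_two_mul] at this
    linarith
  have hup := le_sin_mul_two_sub_cos hα₀.le (by linarith)
  refine ⟨hμα ▸ mul_pos hS hsinα, ?_, ?_⟩ <;> rw [hA', hμα]
  · rw [hRα]
    nlinarith [mul_le_mul_of_nonneg_left hlow (sq_nonneg S)]
  · nlinarith [mul_le_mul_of_nonneg_left hup (sq_nonneg S)]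

/-- A circular arc from `(0,0)` to `(0,2R)` whose balayage area is
`πR²/2 + 2Rh` with `h > 0` lies on a circle of radius `S > R` centered at
`(μ, R)` with `μ > 0` and `S² = R² + μ²`, and its balayage area `A`
satisfies `πS²/2 + 2Rμ ≤ A ≤ πS²/2 + 2Sμ`. -/
theorem stmt17 (R h T S : ℝ) (hR : 0 < R) (hh : 0 < h) (hT : 0 < T) (hS : 0 < S)
    (ρ ρ' : ℝ → ℝ × ℝ) (c : ℝ × ℝ)
    (hderiv : ∀ t ∈ Set.Icc 0 T, HasDerivAt ρ (ρ' t) t)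
    (hcirc : ∀ t ∈ Set.Icc 0 T,
      ((ρ t).1 - c.1) ^ 2 + ((ρ t).2 - c.2) ^ 2 = S ^ 2)
    (h0 : ρ 0 = (0, 0)) (hend : ρ T = (0, 2 * R))
    (hinj : Set.InjOn ρ (Set.Ico 0 T))
    (harea : (1/2) * ∫ t in (0:ℝ)..T, ((ρ t).1 * (ρ' t).2 - (ρ t).2 * (ρ' t).1)
      = π * R ^ 2 / 2 + 2 * R * h) :
    R < S ∧ ∃ μ : ℝ, 0 < μ ∧ c = (μ, R) ∧ S ^ 2 = R ^ 2 + μ ^ 2 ∧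
      π * S ^ 2 / 2 + 2 * R * μ ≤ π * R ^ 2 / 2 + 2 * R * h ∧
      π * R ^ 2 / 2 + 2 * R * h ≤ π * S ^ 2 / 2 + 2 * S * μ := by
  have hmem₀ : (0 : ℝ) ∈ Icc 0 T := left_mem_Icc.mpr hT.le
  have hmemT : T ∈ Icc 0 T := right_mem_Icc.mpr hT.le
  obtain ⟨μ, c₂⟩ := c
  have e₀ := hcirc 0 hmem₀
  have eT := hcirc T hmemT
  rw [h0] at e₀
  rw [hend] at eT
  obtain rfl : R = c₂ := by
    have : R * (R - c₂) = 0 := by linear_combination (eT - e₀) / 4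
    linarith [(mul_eq_zero.mp this).resolve_left hR.ne']
  have hSμ : S ^ 2 = R ^ 2 + μ ^ 2 := by linear_combination -e₀
  have hρ : ContinuousOn ρ (Icc 0 T) := fun t ht => (hderiv t ht).continuousAt.continuousWithinAt
  obtain ⟨θ, hθ, hangle⟩ := exists_continuous_angle_of_mem_circle hT.le hS.ne' hρ hcirc
  have hint :
      IntervalIntegrable (fun t => (ρ t).1 * (ρ' t).2 - (ρ t).2 * (ρ' t).1) volume 0 T := by
    by_contra hint
    rw [intervalIntegral.integral_undef hint] at harea
    nlinarith [mul_pos hR hh, mul_pos pi_pos (pow_pos hR 2)]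
  rw [integral_cross_eq_of_angle hT.le hS.ne' hderiv hθ hangle hint, h0, hend] at harea
  dsimp only at harea
  have hwind : θ T - θ 0 < 2 * π :=
    sub_lt_period_of_injOn hT.le two_pi_pos hθ.continuousOn
      (g := fun φ => (μ + S * cos φ, R + S * sin φ)) (fun φ => by simp) hangle hinj
      (by simp [h0, hend, hR.ne'])
  obtain ⟨hx₀, hy₀⟩ := Prod.ext_iff.mp ((hangle 0 hmem₀).symm.trans h0)
  obtain ⟨hxT, hyT⟩ := Prod.ext_iff.mp ((hangle T hmemT).symm.trans hend)
  simp only at hx₀ hy₀ hxT hyT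
  have hcos : S ^ 2 * cos (θ T - θ 0) = μ ^ 2 - R ^ 2 := by
    rw [cos_sub]
    linear_combination S * cos (θ 0) * hxT - μ * hx₀ + S * sin (θ 0) * hyT + R * hy₀
  have hsin : S ^ 2 * sin (θ T - θ 0) = -(2 * R * μ) := by
    rw [sin_sub]
    linear_combination S * cos (θ 0) * hyT + R * hx₀ - S * sin (θ 0) * hxT + μ * hy₀
  obtain ⟨hμ, hlow, hup⟩ := arc_area_bounds hR hS hSμ hwind hcos hsin
    (by linarith [mul_pos hR hh])
  exact ⟨by nlinarith, μ, hμ, rfl, hSμ, by linarith, by linarith⟩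
end

section
/- For the Heisenberg group ℍ with a left-invariant subRiemannian metric d whose horizontal space is (V, g) with π|_V : V → 𝔥/[𝔥,𝔥] surjective, the abelianization map π̂ : (ℍ, d) → (𝔥/[𝔥,𝔥], ‖·‖) is a submetry, where ‖w‖ := inf{√g(v,v) : v ∈ V, π(v) = w}. Equivalently, for all R > 0: π̂({p ∈ ℍ : d(0,p) ≤ R}) = {w : ‖w‖ ≤ R}. -/
open Real

/-- The differential of left translation by `p` in the Heisenberg group
(exponential coordinates) applied to `v ∈ 𝔥`:
`dL_p(v) = (v₁, v₂, v₃ + (p₁v₂ - p₂v₁)/2)`. -/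
noncomputable def HL (p v : ℝ × ℝ × ℝ) : ℝ × ℝ × ℝ :=
  (v.1, v.2.1, v.2.2 + (p.1 * v.2.1 - p.2.1 * v.1) / 2)

/-- The abelianization projection `π : 𝔥 → 𝔥/[𝔥,𝔥] ≅ ℝ²` (and `π̂` on the group). -/
noncomputable def Hproj (p : ℝ × ℝ × ℝ) : ℝ × ℝ := (p.1, p.2.1)

/-- The left-invariant subRiemannian distance with horizontal space `(V, g)`:
infimum of `∫₀¹ √(g(v(t),v(t)))` over curves whose Maurer–Cartan derivative
`v(t)` lies in `V`. -/
noncomputable def dsub (V : Submodule ℝ (ℝ × ℝ × ℝ))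
    (g : (ℝ × ℝ × ℝ) → (ℝ × ℝ × ℝ) → ℝ) (p q : ℝ × ℝ × ℝ) : ℝ :=
  sInf {L | ∃ (γ v : ℝ → ℝ × ℝ × ℝ), Continuous v ∧ γ 0 = p ∧ γ 1 = q ∧
    (∀ t ∈ Set.Icc (0:ℝ) 1, v t ∈ V ∧ HasDerivAt γ (HL (γ t) (v t)) t) ∧
    L = ∫ t in (0:ℝ)..1, Real.sqrt (g (v t) (v t))}

/-- The norm induced on the abelianization: `‖w‖ = inf{√g(v,v) : v ∈ V, π(v) = w}`. -/
noncomputable def Nsub (V : Submodule ℝ (ℝ × ℝ × ℝ))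
    (g : (ℝ × ℝ × ℝ) → (ℝ × ℝ × ℝ) → ℝ) (w : ℝ × ℝ) : ℝ :=
  sInf {r | ∃ v ∈ V, Hproj v = w ∧ r = Real.sqrt (g v v)}

/-!
A horizontal curve projects to a curve in `ℝ²` whose velocity is the projection of its horizontal
velocity. The infimum defining `‖w‖` is attained by a linear lift `m : ℝ² → V` (the `g`-orthogonal
one), so `‖·‖` is the norm of the form `g (m ·) (m ·)`, and `‖π v‖² ≤ g v v` on `V`. By
Cauchy–Schwarz, `‖∫ u‖ ≤ ∫ ‖u‖`, so the endpoint of a horizontal curve of length `L` projects into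
the `‖·‖`-ball of radius `L`. This uses that every point is joined to `0` by a horizontal curve:
a polynomial loop of suitable signed area fixes the central coordinate. Conversely, the segment
`t ↦ t • m w` is horizontal, of length `‖w‖`.
-/

open Set

namespace LinearMap.BilinForm

variable {E : Type*} [AddCommGroup E] [Module ℝ E]

theorem apply_self_le_apply_add_smul (B : LinearMap.BilinForm ℝ E) (hB : LinearMap.IsSymm B)
    {x k : E} (hxk : B x k = 0) (hk : 0 ≤ B k k) (c : ℝ) : B x x ≤ B (x + c • k) (x + c • k) := by
  have hkx : B k x = 0 := by rw [← hB.eq x k, hxk, map_zero]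
  simp only [map_add, map_smul, LinearMap.add_apply, LinearMap.smul_apply, smul_eq_mul, hxk, hkx]
  nlinarith [mul_nonneg (sq_nonneg c) hk]

theorem sqrt_apply_intervalIntegral_le {F : Type*} [NormedAddCommGroup F] [NormedSpace ℝ F]
    [FiniteDimensional ℝ F] (B : LinearMap.BilinForm ℝ F) (hB : LinearMap.IsSymm B)
    (hnn : ∀ x, 0 ≤ B x x) {u : ℝ → F} (hu : Continuous u) {a b : ℝ} (hab : a ≤ b) :
    √(B (∫ t in a..b, u t) (∫ t in a..b, u t)) ≤ ∫ t in a..b, √(B (u t) (u t)) := by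
  have : CompleteSpace F := FiniteDimensional.complete ℝ F
  set P := ∫ t in a..b, u t
  have hBc : Continuous fun x : F × F => B x.1 x.2 := B.toContinuousBilinearMap.continuous₂
  have hcs (x : F) : B x P ≤ √(B x x) * √(B P P) := by
    rw [← Real.sqrt_mul (hnn x)]
    exact (le_abs_self _).trans (Real.abs_le_sqrt (B.apply_sq_le_of_symm hnn hB x P))
  have hPP : B P P = ∫ t in a..b, B (u t) P :=
    ((B.flip P).toContinuousLinearMap.intervalIntegral_comp_comm (hu.intervalIntegrable a b)).symm
  have hle : √(B P P) * √(B P P) ≤ (∫ t in a..b, √(B (u t) (u t))) * √(B P P) :=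
    calc √(B P P) * √(B P P) = ∫ t in a..b, B (u t) P := by rw [Real.mul_self_sqrt (hnn P), hPP]
      _ ≤ ∫ t in a..b, √(B (u t) (u t)) * √(B P P) :=
        intervalIntegral.integral_mono_on hab
          ((hBc.comp (hu.prodMk continuous_const)).intervalIntegrable a b)
          (((hBc.comp (hu.prodMk hu)).sqrt.mul continuous_const).intervalIntegrable a b)
          fun t _ => hcs (u t)
      _ = (∫ t in a..b, √(B (u t) (u t))) * √(B P P) := intervalIntegral.integral_mul_const _ _
  rcases (Real.sqrt_nonneg (B P P)).eq_or_lt with h0 | hpos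
  · rw [← h0]
    exact intervalIntegral.integral_nonneg hab fun t _ => Real.sqrt_nonneg _
  · exact le_of_mul_le_mul_right hle hpos

end LinearMap.BilinForm

theorem exists_linear_lift_minimizing {E F : Type*} [AddCommGroup E] [Module ℝ E] [AddCommGroup F]
    [Module ℝ F] (B : LinearMap.BilinForm ℝ E) (hB : LinearMap.IsSymm B) (q : E →ₗ[ℝ] F)
    (V : Submodule ℝ E) (hpos : ∀ x ∈ V, x ≠ 0 → 0 < B x x) (hsurj : ∀ w, ∃ v ∈ V, q v = w)
    {k : E} (hk : V ⊓ LinearMap.ker q = ℝ ∙ k) :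
    ∃ m : F →ₗ[ℝ] E, ∀ w, m w ∈ V ∧ q (m w) = w ∧ ∀ u ∈ V, q u = w → B (m w) (m w) ≤ B u u := by
  obtain ⟨s, hs⟩ := (q ∘ₗ V.subtype).exists_rightInverse_of_surjective <|
    LinearMap.range_eq_top.mpr fun w => by
      obtain ⟨v, hv, rfl⟩ := hsurj w
      exact ⟨⟨v, hv⟩, rfl⟩
  have hkV : k ∈ V ⊓ LinearMap.ker q := hk ▸ Submodule.mem_span_singleton_self k
  have hkk : 0 ≤ B k k := by
    rcases eq_or_ne k 0 with rfl | hk0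
    · simp
    · exact (hpos k hkV.1 hk0).le
  let m : F →ₗ[ℝ] E := V.subtype ∘ₗ s - (B.flip k ∘ₗ V.subtype ∘ₗ s).smulRight ((B k k)⁻¹ • k)
  have hmV (w : F) : m w ∈ V :=
    V.sub_mem (s w).2 (V.smul_mem _ (V.smul_mem _ hkV.1))
  have hqm (w : F) : q (m w) = w := by
    simpa [m, LinearMap.mem_ker.mp hkV.2] using LinearMap.congr_fun hs w
  have horth (w : F) : B (m w) k = 0 := by
    rcases eq_or_ne k 0 with rfl | hk0
    · simp
    · have := (hpos k hkV.1 hk0).ne'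
      simp only [m, LinearMap.sub_apply, LinearMap.comp_apply, Submodule.coe_subtype,
        LinearMap.smulRight_apply, LinearMap.BilinForm.flip_apply, map_sub, map_smul,
        LinearMap.smul_apply, smul_eq_mul]
      field_simp
      ring
  refine ⟨m, fun w => ⟨hmV w, hqm w, fun u hu huw => ?_⟩⟩
  obtain ⟨c, hc⟩ : ∃ c : ℝ, c • k = u - m w := Submodule.mem_span_singleton.mp <| hk ▸
    ⟨V.sub_mem hu (hmV w), by simp [hqm, huw]⟩
  rw [show u = m w + c • k by rw [hc, add_sub_cancel]]
  exact B.apply_self_le_apply_add_smul hB (horth w) hkk c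

def HprojL : ℝ × ℝ × ℝ →L[ℝ] ℝ × ℝ :=
  (ContinuousLinearMap.fst ℝ ℝ (ℝ × ℝ)).prod
    ((ContinuousLinearMap.fst ℝ ℝ ℝ).comp (ContinuousLinearMap.snd ℝ ℝ (ℝ × ℝ)))

theorem HprojL_apply (p : ℝ × ℝ × ℝ) : HprojL p = Hproj p := rfl

theorem ker_HprojL : LinearMap.ker (HprojL : ℝ × ℝ × ℝ →ₗ[ℝ] ℝ × ℝ) = ℝ ∙ (0, 0, 1) := by
  ext ⟨a, b, c⟩
  simp [Submodule.mem_span_singleton, HprojL_apply, Hproj, Prod.ext_iff, eq_comm]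

theorem exists_inf_ker_HprojL_eq_span (V : Submodule ℝ (ℝ × ℝ × ℝ)) :
    ∃ k, V ⊓ LinearMap.ker (HprojL : ℝ × ℝ × ℝ →ₗ[ℝ] ℝ × ℝ) = ℝ ∙ k := by
  rw [ker_HprojL]
  by_cases he : ((0, 0, 1) : ℝ × ℝ × ℝ) ∈ V
  · exact ⟨_, inf_eq_right.mpr ((Submodule.span_singleton_le_iff_mem _ _).mpr he)⟩
  · refine ⟨0, ?_⟩
    rw [Submodule.span_zero_singleton, ← disjoint_iff]
    exact Submodule.disjoint_span_singleton_of_notMem he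

def IsHorizontalCurve (V : Submodule ℝ (ℝ × ℝ × ℝ)) (γ v : ℝ → ℝ × ℝ × ℝ) : Prop :=
  Continuous v ∧ ∀ t ∈ Icc (0 : ℝ) 1, v t ∈ V ∧ HasDerivAt γ (HL (γ t) (v t)) t

theorem hasDerivAt_horizontalLift {x₃ y₃ : ℝ} {γ₁ γ₂ F : ℝ → ℝ} {a b t : ℝ}
    (h₁ : HasDerivAt γ₁ a t) (h₂ : HasDerivAt γ₂ b t)
    (hF : HasDerivAt F ((γ₁ t * b - γ₂ t * a) / 2) t) :
    HasDerivAt (fun s => (γ₁ s, γ₂ s, x₃ * γ₁ s + y₃ * γ₂ s + F s))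
      (HL (γ₁ t, γ₂ t, x₃ * γ₁ t + y₃ * γ₂ t + F t) (a • (1, 0, x₃) + b • (0, 1, y₃))) t := by
  have hHL : HL (γ₁ t, γ₂ t, x₃ * γ₁ t + y₃ * γ₂ t + F t) (a • (1, 0, x₃) + b • (0, 1, y₃))
      = (a, b, x₃ * a + y₃ * b + (γ₁ t * b - γ₂ t * a) / 2) := by
    simp only [HL, Prod.smul_mk, Prod.mk_add_mk, smul_eq_mul, Prod.ext_iff]
    refine ⟨by ring, by ring, by ring⟩
  rw [hHL]
  exact h₁.prodMk (h₂.prodMk (((h₁.const_mul x₃).add (h₂.const_mul y₃)).add hF))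

theorem exists_isHorizontalCurve {V : Submodule ℝ (ℝ × ℝ × ℝ)}
    (hsurj : ∀ w : ℝ × ℝ, ∃ v ∈ V, Hproj v = w) (p : ℝ × ℝ × ℝ) :
    ∃ γ v, IsHorizontalCurve V γ v ∧ γ 0 = 0 ∧ γ 1 = p := by
  obtain ⟨⟨_, _, x₃⟩, hX, hX'⟩ := hsurj (1, 0)
  obtain ⟨⟨_, _, y₃⟩, hY, hY'⟩ := hsurj (0, 1)
  simp only [Hproj, Prod.mk.injEq] at hX' hY'
  obtain ⟨rfl, rfl⟩ := hX'
  obtain ⟨rfl, rfl⟩ := hY'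
  obtain ⟨p₁, p₂, p₃⟩ := p
  -- The loop `(t(1-t), s t(1-t)(1-2t))` added to the segment from `0` to `(p₁, p₂)` encloses the
  -- signed area `p₂/6 - s/30`; `s` is chosen so that the central coordinate ends at `p₃`.
  set s := 5 * p₂ - 30 * (p₃ - x₃ * p₁ - y₃ * p₂)
  have h₁ (t : ℝ) : HasDerivAt (fun t => p₁ * t + t * (1 - t)) (p₁ + 1 - 2 * t) t := by
    refine (((hasDerivAt_id' t).const_mul p₁).add
      ((hasDerivAt_id' t).mul ((hasDerivAt_id' t).const_sub 1))).congr_deriv ?_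
    ring
  have h₂ (t : ℝ) : HasDerivAt (fun t => p₂ * t + s * (t * (1 - t) * (1 - 2 * t)))
      (p₂ + s * (1 - 6 * t + 6 * t ^ 2)) t := by
    refine (((hasDerivAt_id' t).const_mul p₂).add ((((hasDerivAt_id' t).mul
      ((hasDerivAt_id' t).const_sub 1)).mul
        (((hasDerivAt_id' t).const_mul 2).const_sub 1)).const_mul s)).congr_deriv ?_
    simp only [Pi.mul_apply]
    ring
  have hF (t : ℝ) : HasDerivAt
      (fun t => (p₂ / 6 - s * p₁ / 2 - s / 3) * t ^ 3 + s * (p₁ + 1) / 2 * t ^ 4 - s / 5 * t ^ 5)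
      (((p₁ * t + t * (1 - t)) * (p₂ + s * (1 - 6 * t + 6 * t ^ 2))
        - (p₂ * t + s * (t * (1 - t) * (1 - 2 * t))) * (p₁ + 1 - 2 * t)) / 2) t := by
    refine ((((hasDerivAt_pow 3 t).const_mul _).add ((hasDerivAt_pow 4 t).const_mul _)).sub
      ((hasDerivAt_pow 5 t).const_mul _)).congr_deriv ?_
    push_cast
    ring
  refine ⟨_, _, ⟨by fun_prop, fun t _ => ⟨V.add_mem (V.smul_mem _ hX) (V.smul_mem _ hY),
    hasDerivAt_horizontalLift (h₁ t) (h₂ t) (hF t)⟩⟩, by simp, ?_⟩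
  simp only [Prod.mk.injEq]
  refine ⟨by ring, by ring, ?_⟩
  simp only [s]
  ring

section dsub

variable {V : Submodule ℝ (ℝ × ℝ × ℝ)} {g : (ℝ × ℝ × ℝ) → (ℝ × ℝ × ℝ) → ℝ}

theorem dsub_le_integral {p q : ℝ × ℝ × ℝ} {γ v : ℝ → ℝ × ℝ × ℝ} (hγ : IsHorizontalCurve V γ v)
    (h0 : γ 0 = p) (h1 : γ 1 = q) : dsub V g p q ≤ ∫ t in (0 : ℝ)..1, √(g (v t) (v t)) := by
  refine csInf_le ⟨0, ?_⟩ ⟨γ, v, hγ.1, h0, h1, hγ.2, rfl⟩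
  rintro _ ⟨γ, v, -, -, -, -, rfl⟩
  exact intervalIntegral.integral_nonneg zero_le_one fun t _ => Real.sqrt_nonneg _

theorem le_dsub {p q : ℝ × ℝ × ℝ} {c : ℝ}
    (hreach : ∃ γ v, IsHorizontalCurve V γ v ∧ γ 0 = p ∧ γ 1 = q)
    (hle : ∀ γ v, IsHorizontalCurve V γ v → γ 0 = p → γ 1 = q →
      c ≤ ∫ t in (0 : ℝ)..1, √(g (v t) (v t))) :
    c ≤ dsub V g p q := by
  obtain ⟨γ, v, hγ, h0, h1⟩ := hreach
  refine le_csInf ⟨_, γ, v, hγ.1, h0, h1, hγ.2, rfl⟩ ?_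
  rintro _ ⟨γ, v, hv, h0, h1, hγ, rfl⟩
  exact hle γ v ⟨hv, hγ⟩ h0 h1

theorem dsub_zero_le_sqrt {v : ℝ × ℝ × ℝ} (hv : v ∈ V) : dsub V g 0 v ≤ √(g v v) := by
  have hline : IsHorizontalCurve V (fun t => t • v) fun _ => v := by
    refine ⟨continuous_const, fun t _ => ⟨hv, ?_⟩⟩
    have hHL : HL (t • v) v = v := by
      simp only [HL, Prod.smul_fst, Prod.smul_snd, smul_eq_mul, Prod.ext_iff, true_and]
      ring
    simpa [hHL] using (hasDerivAt_id t).smul_const v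
  simpa using dsub_le_integral (g := g) hline (by simp) (by simp)

end dsub

theorem IsHorizontalCurve.Hproj_sub_eq_integral {V : Submodule ℝ (ℝ × ℝ × ℝ)}
    {γ v : ℝ → ℝ × ℝ × ℝ} (hγ : IsHorizontalCurve V γ v) :
    Hproj (γ 1) - Hproj (γ 0) = ∫ t in (0 : ℝ)..1, Hproj (v t) := by
  refine (intervalIntegral.integral_eq_sub_of_hasDerivAt (f := fun t => HprojL (γ t))
    (fun t ht => ?_) ((HprojL.continuous.comp hγ.1).intervalIntegrable 0 1)).symm
  rw [uIcc_of_le zero_le_one] at ht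
  -- `HL` only changes the central coordinate, which `Hproj` forgets.
  exact (HprojL.hasFDerivAt.comp_hasDerivAt t (hγ.2 t ht).2 :)

theorem sqrt_apply_Hproj_sub_le_dsub {V : Submodule ℝ (ℝ × ℝ × ℝ)}
    {g : (ℝ × ℝ × ℝ) → (ℝ × ℝ × ℝ) → ℝ} (hg : IsBilinearMap ℝ g)
    (B : LinearMap.BilinForm ℝ (ℝ × ℝ)) (hB : LinearMap.IsSymm B) (hnn : ∀ w, 0 ≤ B w w)
    (hBg : ∀ u ∈ V, B (Hproj u) (Hproj u) ≤ g u u) {p q : ℝ × ℝ × ℝ}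
    (hreach : ∃ γ v, IsHorizontalCurve V γ v ∧ γ 0 = p ∧ γ 1 = q) :
    √(B (Hproj q - Hproj p) (Hproj q - Hproj p)) ≤ dsub V g p q := by
  refine le_dsub hreach fun γ v hγ h0 h1 => ?_
  have hgc : Continuous fun x : (ℝ × ℝ × ℝ) × (ℝ × ℝ × ℝ) => g x.1 x.2 :=
    hg.toContinuousBilinearMap.continuous₂
  have hBc : Continuous fun x : (ℝ × ℝ) × (ℝ × ℝ) => B x.1 x.2 :=
    B.toContinuousBilinearMap.continuous₂
  subst h0 h1
  rw [hγ.Hproj_sub_eq_integral]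
  calc √(B (∫ t in (0 : ℝ)..1, Hproj (v t)) (∫ t in (0 : ℝ)..1, Hproj (v t)))
      ≤ ∫ t in (0 : ℝ)..1, √(B (Hproj (v t)) (Hproj (v t))) :=
        B.sqrt_apply_intervalIntegral_le hB hnn (HprojL.continuous.comp hγ.1) zero_le_one
    _ ≤ ∫ t in (0 : ℝ)..1, √(g (v t) (v t)) := by
        refine intervalIntegral.integral_mono_on zero_le_one ?_ ?_
          fun t ht => Real.sqrt_le_sqrt (hBg _ (hγ.2 t ht).1)
        · exact (hBc.comp ((HprojL.continuous.comp hγ.1).prodMk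
            (HprojL.continuous.comp hγ.1))).sqrt.intervalIntegrable 0 1
        · exact (hgc.comp (hγ.1.prodMk hγ.1)).sqrt.intervalIntegrable 0 1

theorem Nsub_eq_sqrt_of_isLeast {V : Submodule ℝ (ℝ × ℝ × ℝ)}
    {g : (ℝ × ℝ × ℝ) → (ℝ × ℝ × ℝ) → ℝ} {w : ℝ × ℝ} {u : ℝ × ℝ × ℝ} (hu : u ∈ V)
    (huw : Hproj u = w) (hmin : ∀ u' ∈ V, Hproj u' = w → g u u ≤ g u' u') :
    Nsub V g w = √(g u u) := by
  refine IsLeast.csInf_eq ⟨⟨u, hu, huw, rfl⟩, ?_⟩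
  rintro _ ⟨u', hu', hu'w, rfl⟩
  exact Real.sqrt_le_sqrt (hmin u' hu' hu'w)

/-- The abelianization map `π̂ : (ℍ,d) → (𝔥/[𝔥,𝔥], ‖·‖)` is a submetry:
for every `R > 0`, `π̂({p : d(0,p) ≤ R}) = {w : ‖w‖ ≤ R}`. -/
theorem stmt18 (V : Submodule ℝ (ℝ × ℝ × ℝ))
    (g : (ℝ × ℝ × ℝ) → (ℝ × ℝ × ℝ) → ℝ)
    (hg_symm : ∀ v w, g v w = g w v)
    (hg_add : ∀ u v w, g (u + v) w = g u w + g v w)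
    (hg_smul : ∀ (r : ℝ) (v w), g (r • v) w = r * g v w)
    (hg_pos : ∀ v ∈ V, v ≠ 0 → 0 < g v v)
    (hsurj : ∀ w : ℝ × ℝ, ∃ v ∈ V, Hproj v = w) :
    ∀ R > (0:ℝ),
      Hproj '' {p | dsub V g 0 p ≤ R} = {w | Nsub V g w ≤ R} := by
  intro R _
  have hg : IsBilinearMap ℝ g :=
    ⟨hg_add, hg_smul, fun u v w => by rw [hg_symm, hg_add, hg_symm v, hg_symm w],
      fun r v w => by rw [hg_symm, hg_smul, hg_symm w, smul_eq_mul]⟩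
  have hB : LinearMap.IsSymm hg.toLinearMap := ⟨fun v w => hg_symm v w⟩
  obtain ⟨k, hk⟩ := exists_inf_ker_HprojL_eq_span V
  obtain ⟨m, hm⟩ := exists_linear_lift_minimizing hg.toLinearMap hB
    (HprojL : ℝ × ℝ × ℝ →ₗ[ℝ] ℝ × ℝ) V hg_pos hsurj hk
  have hN (w : ℝ × ℝ) : Nsub V g w = √(g (m w) (m w)) :=
    Nsub_eq_sqrt_of_isLeast (hm w).1 (hm w).2.1 (hm w).2.2
  let B := hg.toLinearMap.compl₁₂ m m
  have hBnn (w : ℝ × ℝ) : 0 ≤ B w w := by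
    rcases eq_or_ne (m w) 0 with h | h
    · simp [B, h]
    · exact (hg_pos _ (hm w).1 h).le
  have hBg (u) (hu : u ∈ V) : B (Hproj u) (Hproj u) ≤ g u u := (hm (Hproj u)).2.2 u hu rfl
  ext w
  constructor
  · rintro ⟨p, hp, rfl⟩
    calc Nsub V g (Hproj p) = √(B (Hproj p - Hproj 0) (Hproj p - Hproj 0)) := by
          rw [hN, ← HprojL_apply 0, map_zero, sub_zero]; rfl
      _ ≤ dsub V g 0 p := sqrt_apply_Hproj_sub_le_dsub hg B ⟨fun v w => hB.eq (m v) (m w)⟩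
          hBnn hBg (exists_isHorizontalCurve hsurj p)
      _ ≤ R := hp
  · intro hw
    exact ⟨m w, (dsub_zero_le_sqrt (hm w).1).trans (hN w ▸ hw), (hm w).2.1⟩
end
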